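/- Let R be a commutative ring not isomorphic to Z₂ × D for any domain D. Then γ_t(Γ(R)) = γ(Γ(R)). -/

import Mathlib

/-- Vertices of the zero-divisor graph: nonzero zero-divisors. -/
def zdVerts (R : Type*) [CommRing R] : Set R :=
  {x | x ≠ 0 ∧ ∃ y ≠ 0, x * y = 0}

/-- The set of all zero-divisors (including 0 when R is nontrivial). -/
def zdSet (R : Type*) [CommRing R] : Set R :=
  {x | ∃ y ≠ 0, x * y = 0}

/-- A dominating set of the zero-divisor graph Γ(R) (loops allowed: `x` is
adjacent to itself iff `x^2 = 0`). -/
def IsDomSet (R : Type*) [CommRing R] (X : Set R) : Prop :=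
  X ⊆ zdVerts R ∧ ∀ v ∈ zdVerts R, v ∉ X → ∃ x ∈ X, x * v = 0

/-- A total dominating set of Γ(R): every vertex has a neighbor in `X`
(possibly itself, if looped). -/
def IsTotDomSet (R : Type*) [CommRing R] (X : Set R) : Prop :=
  X ⊆ zdVerts R ∧ ∀ v ∈ zdVerts R, ∃ x ∈ X, x * v = 0

/-- The domination number γ(Γ(R)), as a cardinal. -/
noncomputable def domNum (R : Type*) [CommRing R] : Cardinal :=
  ⨅ X : {X : Set R // IsDomSet R X}, Cardinal.mk X.1

/-- The total domination number γ_t(Γ(R)), as a cardinal. -/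
noncomputable def totDomNum (R : Type*) [CommRing R] : Cardinal :=
  ⨅ X : {X : Set R // IsTotDomSet R X}, Cardinal.mk X.1

/-- The zero-divisor graph as a simple graph (loops discarded), used for girth. -/
def zdGraph (R : Type*) [CommRing R] : SimpleGraph R where
  Adj r s := r ≠ s ∧ r ≠ 0 ∧ s ≠ 0 ∧ r * s = 0
  symm := by constructor; intro r s h; exact ⟨h.1.symm, h.2.2.1, h.2.1, by rw [mul_comm]; exact h.2.2.2⟩
  loopless := by constructor; intro r h; exact h.1 rfl

/-!
A finite dominating set `S` of `Γ(R)` is made total, without growing, by getting rid of its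
isolated vertices one at a time. If `x ∈ S` is isolated and `z ∈ S` is any other element, then
`xz ≠ 0` annihilates everything that `x` or `z` annihilates; exchanging `x, z` for `xz` and an
annihilator, for two annihilators, or (together with some `w ∈ S` killing `xz`) for the triangle
`xz, zw, wx`, keeps `S` dominating and lowers the number of isolated vertices.
This fails only for `S = {x}` with `x² ≠ 0`. Then `x` is idempotent, `Rx = {0, x} ≅ ℤ/2` and
`R/(x)` is a domain, so `R ≅ ℤ/2 × R/(x)`.
An infinite dominating set becomes total by adding one annihilator of each of its elements.
-/

open Finset

variable {R : Type*} [CommRing R]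

lemma mem_zdVerts_of_mul_eq_zero {x y : R} (hx : x ≠ 0) (hy : y ≠ 0) (h : x * y = 0) :
    x ∈ zdVerts R :=
  ⟨hx, y, hy, h⟩

lemma zdVerts_isTotDomSet : IsTotDomSet R (zdVerts R) :=
  ⟨subset_rfl, fun _ ⟨hv, y, hy, hvy⟩ =>
    ⟨y, mem_zdVerts_of_mul_eq_zero hy hv (by rwa [mul_comm]), by rwa [mul_comm]⟩⟩

lemma IsTotDomSet.isDomSet {X : Set R} (h : IsTotDomSet R X) : IsDomSet R X :=
  ⟨h.1, fun v hv _ => h.2 v hv⟩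

lemma ZMod.nonempty_ringEquiv_two_of_forall {A : Type*} [CommRing A] [Nontrivial A]
    (h : ∀ a : A, a = 0 ∨ a = 1) : Nonempty (A ≃+* ZMod 2) := by
  have htwo : (2 : A) = 0 := by
    rcases h 2 with h2 | h2
    · exact h2
    · exact absurd (by linear_combination h2 : (1 : A) = 0) one_ne_zero
  have := CharTwo.of_one_ne_zero_of_two_eq_zero one_ne_zero htwo
  refine ⟨(RingEquiv.ofBijective (ZMod.castHom dvd_rfl A) ⟨RingHom.injective _, ?_⟩).symm⟩
  intro a
  rcases h a with rfl | rfl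
  exacts [⟨0, map_zero _⟩, ⟨1, map_one _⟩]

lemma IsIdempotentElem.dvd_iff_mul_one_sub_eq_zero {e r : R} (he : IsIdempotentElem e) :
    e ∣ r ↔ r * (1 - e) = 0 := by
  constructor
  · rintro ⟨c, rfl⟩
    linear_combination -c * he.eq
  · intro h
    exact ⟨r, by linear_combination h⟩

namespace IsDomSet

variable {x : R} (hS : IsDomSet R {x})
include hS

lemma mul_eq_zero_of_singleton {v : R} (hv : v ∈ zdVerts R) (hvx : v ≠ x) : x * v = 0 := by
  obtain ⟨t, rfl, htv⟩ := hS.2 v hv hvx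
  exact htv

variable (hx : x * x ≠ 0)
include hx

lemma mul_eq_zero_or_eq_of_singleton (r : R) : r * x = 0 ∨ r * x = x := by
  obtain ⟨-, y, hy, hxy⟩ := hS.1 rfl
  have hsmall : ∀ r : R, r * x ≠ 0 → r * x ≠ x → r * x * x = 0 := fun r h0 hx' => by
    linear_combination
      hS.mul_eq_zero_of_singleton (mem_zdVerts_of_mul_eq_zero h0 hy (by linear_combination r * hxy)) hx'
  -- Otherwise `x³ = 0`, and `x + x²` would be a vertex other than `x` with `x (x + x²) = x² ≠ 0`.
  have hidem : x * x = x := by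
    by_contra hne
    have hcube := hsmall x hx hne
    have h := hsmall (1 + x) (fun h => hx (by linear_combination x * h - hcube))
      (fun h => hx (by linear_combination h))
    exact hx (by linear_combination h - hcube)
  by_contra! h
  exact h.1 (by linear_combination hsmall r h.1 h.2 - r * hidem)

lemma isIdempotentElem_of_singleton : IsIdempotentElem x :=
  ((hS.mul_eq_zero_or_eq_of_singleton hx x).resolve_left hx)

lemma nonempty_quotient_ringEquiv_zmod_two :
    Nonempty (R ⧸ Ideal.span {1 - x} ≃+* ZMod 2) := by
  have he := (hS.isIdempotentElem_of_singleton hx).one_sub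
  have hx0 : x ≠ 0 := fun h => hx (by rw [h, mul_zero])
  have hmk : ∀ r : R, (Ideal.Quotient.mk (Ideal.span {1 - x}) r) = 0 ↔ r * x = 0 := fun r => by
    rw [Ideal.Quotient.eq_zero_iff_mem, Ideal.mem_span_singleton, he.dvd_iff_mul_one_sub_eq_zero,
      sub_sub_cancel]
  have : Nontrivial (R ⧸ Ideal.span {1 - x}) := by
    refine Ideal.Quotient.nontrivial_iff.mpr fun h => hx0 ?_
    rw [Ideal.span_singleton_eq_top] at h
    exact h.mul_right_eq_zero.1 (by linear_combination -(hS.isIdempotentElem_of_singleton hx).eq)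
  refine ZMod.nonempty_ringEquiv_two_of_forall fun q => ?_
  obtain ⟨r, rfl⟩ := Ideal.Quotient.mk_surjective q
  rcases hS.mul_eq_zero_or_eq_of_singleton hx r with h | h
  · exact Or.inl ((hmk r).2 h)
  · refine Or.inr (sub_eq_zero.1 ?_)
    rw [← map_one (Ideal.Quotient.mk _), ← map_sub, hmk]
    linear_combination h

lemma isPrime_span_singleton : (Ideal.span {x}).IsPrime := by
  obtain ⟨hx0, y, hy, hxy⟩ := hS.1 rfl
  have he := hS.isIdempotentElem_of_singleton hx
  refine Ideal.isPrime_iff.2 ⟨fun h => hy ?_, fun {a b} hab => ?_⟩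
  · rw [Ideal.span_singleton_eq_top] at h
    exact h.mul_right_eq_zero.1 hxy
  simp only [Ideal.mem_span_singleton, he.dvd_iff_mul_one_sub_eq_zero] at hab ⊢
  by_contra! h
  -- `x + a (1 - x)` is a vertex other than `x`, killed by `b (1 - x)`, yet not by `x`.
  have hv : x + a * (1 - x) ∈ zdVerts R :=
    mem_zdVerts_of_mul_eq_zero (fun h0 => hx0 (by linear_combination x * h0 + (a - 1) * he.eq))
      h.2 (by linear_combination (1 - x) * hab - b * he.eq)
  have := hS.mul_eq_zero_of_singleton hv (fun h' => h.1 (by linear_combination h'))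
  exact hx0 (by linear_combination this + (a - 1) * he.eq)

lemma nonempty_ringEquiv_zmod_two_prod :
    Nonempty (R ≃+* ZMod 2 × (R ⧸ Ideal.span {x})) := by
  have he := hS.isIdempotentElem_of_singleton hx
  obtain ⟨e⟩ := hS.nonempty_quotient_ringEquiv_zmod_two hx
  exact ⟨(AlgEquiv.prodQuotientOfIsIdempotentElem ℤ he.one_sub he (sub_add_cancel 1 x)
    (by linear_combination -he.eq)).toRingEquiv.trans (e.prodCongr (RingEquiv.refl _))⟩

end IsDomSet

section Exchange

variable [DecidableEq R]

def isolated (S : Finset R) : Finset R := {s ∈ S | ∀ u ∈ S, u * s ≠ 0}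

lemma IsDomSet.isTotDomSet_of_isolated_eq_empty {S : Finset R} (hS : IsDomSet R S)
    (h : isolated S = ∅) : IsTotDomSet R S := by
  refine ⟨hS.1, fun v hv => ?_⟩
  by_cases hvS : v ∈ S
  · have hv' : v ∉ isolated S := h ▸ notMem_empty v
    simp only [isolated, mem_filter, hvS, true_and, not_forall, not_not] at hv'
    obtain ⟨u, hu, huv⟩ := hv'
    exact ⟨u, hu, huv⟩
  · exact hS.2 v hv hvS

/-- Replacing `K ⊆ S` by `F` keeps `S` dominating and creates no new isolated vertex: every
`w ∈ K` divides, hence is replaced by, an element of the new set, which annihilates all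
of `K ∪ F`. -/
structure IsExchange (S K F : Finset R) : Prop where
  subset : K ⊆ S
  card_le : #F ≤ #K
  zero_notMem : (0 : R) ∉ F
  dvd : ∀ w ∈ K, ∃ t ∈ S \ K ∪ F, w ∣ t
  annihilated : ∀ v ∈ K ∪ F, ∃ t ∈ S \ K ∪ F, t * v = 0

namespace IsExchange

variable {S K F : Finset R} (h : IsExchange S K F)
include h

lemma card_union_le : #(S \ K ∪ F) ≤ #S := by
  have := card_le_card h.subset
  have := h.card_le
  calc #(S \ K ∪ F) ≤ #(S \ K) + #F := Finset.card_union_le _ _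
    _ = #S - #K + #F := by rw [card_sdiff_of_subset h.subset]
    _ ≤ #S := by omega

lemma exists_mul_eq_zero {w v : R} (hw : w ∈ S) (hwv : w * v = 0) :
    ∃ t ∈ S \ K ∪ F, t * v = 0 := by
  by_cases hwK : w ∈ K
  · obtain ⟨t, ht, c, rfl⟩ := h.dvd w hwK
    exact ⟨_, ht, by linear_combination c * hwv⟩
  · exact ⟨w, mem_union_left _ (mem_sdiff.2 ⟨hw, hwK⟩), hwv⟩

lemma isDomSet (hS : IsDomSet R S) : IsDomSet R ↑(S \ K ∪ F) := by
  have hT0 : ∀ t ∈ S \ K ∪ F, t ≠ 0 := by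
    intro t ht
    rcases mem_union.1 ht with ht | ht
    · exact (hS.1 (mem_sdiff.1 ht).1).1
    · exact ne_of_mem_of_not_mem ht h.zero_notMem
  refine ⟨fun t ht => ?_, fun v hv hvT => ?_⟩
  · rcases mem_union.1 ht with ht' | ht'
    · exact hS.1 (mem_sdiff.1 ht').1
    · obtain ⟨u, hu, hut⟩ := h.annihilated t (mem_union_right _ ht')
      exact mem_zdVerts_of_mul_eq_zero (hT0 t ht) (hT0 u hu) (by rwa [mul_comm])
  · by_cases hvS : v ∈ S
    · refine h.annihilated v (mem_union_left _ ?_)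
      by_contra hvK
      exact hvT (mem_union_left _ (mem_sdiff.2 ⟨hvS, hvK⟩))
    · obtain ⟨w, hw, hwv⟩ := hS.2 v hv hvS
      exact h.exists_mul_eq_zero hw hwv

lemma isolated_subset : isolated (S \ K ∪ F) ⊆ isolated S \ K := by
  intro t ht
  obtain ⟨htT, hlone⟩ := mem_filter.1 ht
  have htS : t ∈ S \ K := by
    refine (mem_union.1 htT).resolve_right fun htF => ?_
    obtain ⟨u, hu, hut⟩ := h.annihilated t (mem_union_right _ htF)
    exact hlone u hu hut
  refine mem_sdiff.2 ⟨mem_filter.2 ⟨(mem_sdiff.1 htS).1, fun u hu hut => ?_⟩, (mem_sdiff.1 htS).2⟩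
  obtain ⟨t', ht', h0⟩ := h.exists_mul_eq_zero hu hut
  exact hlone t' ht' h0

end IsExchange

variable {S : Finset R}

lemma isExchange_pair {x z c : R} (hx : x ∈ S) (hz : z ∈ S) (hxz : x ≠ z) (hd : x * z ≠ 0)
    (hc : c ≠ 0) (hcd : c * (x * z) = 0)
    (hxT : ∃ t ∈ S \ {x, z} ∪ {x * z, c}, t * x = 0)
    (hzT : ∃ t ∈ S \ {x, z} ∪ {x * z, c}, t * z = 0) :
    IsExchange S {x, z} {x * z, c} where
  subset := insert_subset hx (singleton_subset_iff.2 hz)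
  card_le := card_le_two.trans (card_pair hxz).ge
  zero_notMem := by simp [hd.symm, hc.symm]
  dvd := by
    have hdT : x * z ∈ S \ {x, z} ∪ {x * z, c} := by simp
    simp only [mem_insert, mem_singleton, forall_eq_or_imp, forall_eq]
    exact ⟨⟨_, hdT, dvd_mul_right x z⟩, ⟨_, hdT, dvd_mul_left z x⟩⟩
  annihilated := by
    intro v hv
    simp only [mem_union, mem_insert, mem_singleton] at hv
    rcases hv with (rfl | rfl) | rfl | rfl
    · exact hxT
    · exact hzT
    · exact ⟨c, by simp, hcd⟩
    · exact ⟨x * z, by simp, by rw [mul_comm]; exact hcd⟩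

lemma isExchange_of_mul_mem {x z b g : R} (hx : x ∈ S) (hz : z ∈ S) (hxz : x ≠ z)
    (hdS : x * z ∈ S) (hdx : x * z ≠ x) (hdz : x * z ≠ z)
    (hb : b ≠ 0) (hbx : b * x = 0) (hg : g ≠ 0) (hgz : g * z = 0) :
    IsExchange S {x, z} {b, g} := by
  have hdT : x * z ∈ S \ {x, z} ∪ {b, g} := by simp [hdS, hdx, hdz]
  refine ⟨insert_subset hx (singleton_subset_iff.2 hz), card_le_two.trans (card_pair hxz).ge,
    by simp [hb.symm, hg.symm], ?_, ?_⟩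
  · simp only [mem_insert, mem_singleton, forall_eq_or_imp, forall_eq]
    exact ⟨⟨_, hdT, dvd_mul_right x z⟩, ⟨_, hdT, dvd_mul_left z x⟩⟩
  · intro v hv
    simp only [mem_union, mem_insert, mem_singleton] at hv
    rcases hv with (rfl | rfl) | rfl | rfl
    · exact ⟨b, by simp, hbx⟩
    · exact ⟨g, by simp, hgz⟩
    · exact ⟨x * z, hdT, by linear_combination z * hbx⟩
    · exact ⟨x * z, hdT, by linear_combination x * hgz⟩

lemma isExchange_triangle {a b c : R} (ha : a ∈ S) (hb : b ∈ S) (hc : c ∈ S)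
    (hab : a ≠ b) (hbc : b ≠ c) (hca : c ≠ a)
    (hab0 : a * b ≠ 0) (hbc0 : b * c ≠ 0) (hca0 : c * a ≠ 0) (habc : a * b * c = 0) :
    IsExchange S {a, b, c} {a * b, b * c, c * a} where
  subset := insert_subset ha (insert_subset hb (singleton_subset_iff.2 hc))
  card_le := card_le_three.trans (card_eq_three.2 ⟨a, b, c, hab, hca.symm, hbc, rfl⟩).ge
  zero_notMem := by simp [hab0.symm, hbc0.symm, hca0.symm]
  dvd := by
    simp only [mem_insert, mem_singleton, forall_eq_or_imp, forall_eq]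
    exact ⟨⟨a * b, by simp, dvd_mul_right a b⟩, ⟨b * c, by simp, dvd_mul_right b c⟩,
      ⟨c * a, by simp, dvd_mul_right c a⟩⟩
  annihilated := by
    intro v hv
    simp only [mem_union, mem_insert, mem_singleton] at hv
    rcases hv with (rfl | rfl | rfl) | rfl | rfl | rfl
    · exact ⟨b * c, by simp, by linear_combination habc⟩
    · exact ⟨c * a, by simp, by linear_combination habc⟩
    · exact ⟨a * b, by simp, by linear_combination habc⟩
    · exact ⟨b * c, by simp, by linear_combination b * habc⟩
    · exact ⟨c * a, by simp, by linear_combination c * habc⟩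
    · exact ⟨a * b, by simp, by linear_combination a * habc⟩

lemma IsDomSet.exists_isExchange (hS : IsDomSet R S) {x z : R} (hx : x ∈ isolated S)
    (hz : z ∈ S) (hxz : x ≠ z) : ∃ K F, IsExchange S K F ∧ x ∈ K := by
  obtain ⟨hxS, hxlone⟩ := mem_filter.1 hx
  obtain ⟨-, b, hb, hxb⟩ := hS.1 hxS
  obtain ⟨-, g, hg, hzg⟩ := hS.1 hz
  have hd : x * z ≠ 0 := by rw [mul_comm]; exact hxlone z hz
  by_cases hxT : ∃ t ∈ S \ {x, z} ∪ {x * z, g}, t * x = 0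
  · exact ⟨_, _, isExchange_pair hxS hz hxz hd hg (by linear_combination x * hzg) hxT
      ⟨g, by simp, by rwa [mul_comm]⟩, by simp⟩
  by_cases hzT : ∃ t ∈ S \ {x, z} ∪ {x * z, b}, t * z = 0
  · exact ⟨_, _, isExchange_pair hxS hz hxz hd hb (by linear_combination z * hxb)
      ⟨b, by simp, by rwa [mul_comm]⟩ hzT, by simp⟩
  push Not at hxT hzT
  by_cases hdS : x * z ∈ S
  · refine ⟨_, _, isExchange_of_mul_mem hxS hz hxz hdS (fun h => ?_) (fun h => ?_)
      hb (by rwa [mul_comm]) hg (by rwa [mul_comm]), by simp⟩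
    · exact hxT g (by simp) (by linear_combination x * hzg - g * h)
    · exact hzT b (by simp) (by linear_combination z * hxb - b * h)
  -- `x * z` lies outside `S`, so some `w ∈ S` kills it: exchange the triangle `x, z, w`.
  obtain ⟨w, hw, hwd⟩ := hS.2 _ (mem_zdVerts_of_mul_eq_zero hd hb (by linear_combination z * hxb)) hdS
  have hwx : w ≠ x := by
    rintro rfl
    exact hxT (w * z) (by simp) (by linear_combination hwd)
  have hzw : z ≠ w := by
    rintro rfl
    exact hzT (x * z) (by simp) (by linear_combination hwd)
  refine ⟨_, _, isExchange_triangle hxS hz hw hxz hzw hwx hd ?_ (hxlone w hw)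
    (by linear_combination hwd), by simp⟩
  rw [mul_comm]
  exact hzT w (by simp [mem_coe.1 hw, hwx, hzw.symm])

lemma IsDomSet.exists_card_isolated_lt (hS : IsDomSet R S) {x z : R} (hx : x ∈ isolated S)
    (hz : z ∈ S) (hxz : x ≠ z) :
    ∃ T : Finset R, IsDomSet R T ∧ #T ≤ #S ∧ #(isolated T) < #(isolated S) := by
  obtain ⟨K, F, h, hxK⟩ := hS.exists_isExchange hx hz hxz
  refine ⟨S \ K ∪ F, h.isDomSet hS, h.card_union_le, ?_⟩
  calc #(isolated (S \ K ∪ F)) ≤ #((isolated S).erase x) :=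
        card_le_card (h.isolated_subset.trans fun t ht =>
          mem_erase.2 ⟨fun htx => (mem_sdiff.1 ht).2 (htx ▸ hxK), (mem_sdiff.1 ht).1⟩)
    _ < #(isolated S) := card_erase_lt_of_mem hx

lemma IsDomSet.exists_isTotDomSet_card_le (hsing : ∀ x : R, IsDomSet R {x} → x * x = 0)
    (hS : IsDomSet R S) : ∃ T : Finset R, IsTotDomSet R T ∧ #T ≤ #S := by
  induction hn : #(isolated S) using Nat.strong_induction_on generalizing S with
  | _ n ih =>
  obtain hempty | ⟨x, hx⟩ := (isolated S).eq_empty_or_nonempty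
  · exact ⟨S, hS.isTotDomSet_of_isolated_eq_empty hempty, le_rfl⟩
  obtain ⟨hxS, hxlone⟩ := mem_filter.1 hx
  obtain ⟨z, hz, hzx⟩ : ∃ z ∈ S, z ≠ x := by
    by_contra! h
    obtain rfl : S = {x} := eq_singleton_iff_unique_mem.2 ⟨hxS, h⟩
    exact hxlone x (mem_singleton_self x) (hsing x (by simpa using hS))
  obtain ⟨T, hT, hTS, hlt⟩ := hS.exists_card_isolated_lt hx hz hzx.symm
  obtain ⟨U, hU, hUT⟩ := ih _ (hn ▸ hlt) hT rfl
  exact ⟨U, hU, hUT.trans hTS⟩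

end Exchange

lemma IsDomSet.exists_isTotDomSet_mk_le_of_aleph0_le {S : Set R} (hS : IsDomSet R S)
    (hinf : Cardinal.aleph0 ≤ Cardinal.mk S) :
    ∃ T : Set R, IsTotDomSet R T ∧ Cardinal.mk T ≤ Cardinal.mk S := by
  choose! g hg0 hg using fun s (hs : s ∈ zdVerts R) => hs.2
  refine ⟨S ∪ g '' S, ⟨?_, fun v hv => ?_⟩, ?_⟩
  · rintro t (ht | ⟨s, hs, rfl⟩)
    · exact hS.1 ht
    · exact mem_zdVerts_of_mul_eq_zero (hg0 s (hS.1 hs)) (hS.1 hs).1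
        (by rw [mul_comm]; exact hg s (hS.1 hs))
  · by_cases hvS : v ∈ S
    · exact ⟨g v, Or.inr ⟨v, hvS, rfl⟩, by rw [mul_comm]; exact hg v hv⟩
    · obtain ⟨t, ht, htv⟩ := hS.2 v hv hvS
      exact ⟨t, Or.inl ht, htv⟩
  · calc Cardinal.mk ↑(S ∪ g '' S) ≤ Cardinal.mk S + Cardinal.mk ↑(g '' S) :=
        Cardinal.mk_union_le _ _
      _ ≤ Cardinal.mk S + Cardinal.mk S := by gcongr; exact Cardinal.mk_image_le
      _ = Cardinal.mk S := Cardinal.add_eq_self hinf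

lemma IsDomSet.exists_isTotDomSet_mk_le (hsing : ∀ x : R, IsDomSet R {x} → x * x = 0)
    {S : Set R} (hS : IsDomSet R S) :
    ∃ T : Set R, IsTotDomSet R T ∧ Cardinal.mk T ≤ Cardinal.mk S := by
  classical
  rcases lt_or_ge (Cardinal.mk S) Cardinal.aleph0 with hfin | hinf
  · lift S to Finset R using Cardinal.lt_aleph0_iff_set_finite.1 hfin
    obtain ⟨T, hT, hTS⟩ := hS.exists_isTotDomSet_card_le hsing
    exact ⟨T, hT, by simpa using hTS⟩
  · exact hS.exists_isTotDomSet_mk_le_of_aleph0_le hinf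

lemma totDomNum_eq_domNum (hsing : ∀ x : R, IsDomSet R {x} → x * x = 0) :
    totDomNum R = domNum R := by
  have : Nonempty {X // IsTotDomSet R X} := ⟨⟨_, zdVerts_isTotDomSet⟩⟩
  have : Nonempty {X // IsDomSet R X} := ⟨⟨_, zdVerts_isTotDomSet.isDomSet⟩⟩
  refine le_antisymm (ciInf_mono_of_forall_exists (OrderBot.bddBelow _) fun S => ?_)
    (ciInf_mono_of_forall_exists (OrderBot.bddBelow _) fun T => ⟨⟨T.1, T.2.isDomSet⟩, le_rfl⟩)
  obtain ⟨T, hT, hTS⟩ := S.2.exists_isTotDomSet_mk_le hsing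
  exact ⟨⟨T, hT⟩, hTS⟩

theorem stmt_18 (R : Type u) [CommRing R]
    (hni : ∀ (D : Type u) [CommRing D] [IsDomain D], ¬ Nonempty (R ≃+* ZMod 2 × D)) :
    totDomNum R = domNum R := by
  refine totDomNum_eq_domNum fun x hx => by_contra fun hxx => ?_
  have := hx.isPrime_span_singleton hxx
  exact hni _ (hx.nonempty_ringEquiv_zmod_two_prod hxx)
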